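/- arXiv:2602.14902 — 4 statements merged into one kernel-verified Lean document; each statement's English description precedes it below -/
import Mathlib

section
/- In the situation of the gluing lemma (Y = X₁X₂ with X₁ ⊴ Y, ϑ₁ ∈ Irr(X₁) Y-invariant, ϑ₂ ∈ Irr(X₂), and their restrictions to X₁ ∩ X₂ coincide and are irreducible, with ϑ the unique common extension to Y), every field automorphism σ of ℂ (equivalently, every element of Gal(ℚᵃᵇ/ℚ) acting on character values) that fixes both ϑ₁ and ϑ₂ also fixes ϑ. -/
open CategoryTheory Module Representation

noncomputable section
namespace GluedAux

variable {G : Type} [Group G]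

def cardInv [Fintype G] : Invertible ((Fintype.card G : ℂ)) :=
  invertibleOfNonzero (Nat.cast_ne_zero.mpr Fintype.card_ne_zero)

lemma homFormula [Fintype G] (A B : FDRep ℂ G) [Invertible ((Fintype.card G : ℂ))] :
    (finrank ℂ (B ⟶ A) : ℂ) =
      ⅟(Fintype.card G : ℂ) • ∑ g : G, A.character g * B.character g⁻¹ := by
  conv_rhs =>
    enter [2, 2, g]
    rw [mul_comm, ← FDRep.char_dual, ← Pi.mul_apply, ← FDRep.char_tensor]
    rw [FDRep.char_iso (FDRep.dualTensorIsoLinHom B.ρ A)]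
  rw [invOf_eq_inv, smul_eq_mul, ← Nat.card_eq_fintype_card, FDRep.average_char_eq_finrank_invariants]
  exact congrArg Nat.cast (linHom.invariantsEquivFDRepHom B A).finrank_eq.symm

lemma finrank_hom_congr [Fintype G] (A B A' B' : FDRep ℂ G)
    (hA : ∀ g, A.character g = A'.character g) (hB : ∀ g, B.character g = B'.character g) :
    finrank ℂ (B ⟶ A) = finrank ℂ (B' ⟶ A') := by
  haveI := cardInv (G := G)
  have h : (finrank ℂ (B ⟶ A) : ℂ) = (finrank ℂ (B' ⟶ A') : ℂ) := by
    rw [homFormula, homFormula]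
    congr 1
    exact Finset.sum_congr rfl fun g _ => by rw [hA, hB]
  exact_mod_cast h

def res {H : Type} [Group H] (φ : H →* G) (V : FDRep ℂ G) : FDRep ℂ H :=
  FDRep.of (V.ρ.comp φ)

lemma res_char {H : Type} [Group H] (φ : H →* G) (V : FDRep ℂ G) (h : H) :
    (res φ V).character h = V.character (φ h) := rfl

def twistρ (σ : ℂ ≃+* ℂ) (V : FDRep ℂ G) :
    Representation ℂ G (Fin (finrank ℂ V) → ℂ) where
  toFun g := Matrix.toLin'
    (((σ : ℂ →+* ℂ).mapMatrix) (LinearMap.toMatrix (finBasis ℂ V) (finBasis ℂ V) (V.ρ g)))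
  map_one' := by
    show Matrix.toLin' _ = 1
    rw [_root_.map_one V.ρ, LinearMap.toMatrix_one, _root_.map_one, Matrix.toLin'_one]; rfl
  map_mul' g h := by
    show Matrix.toLin' _ = Matrix.toLin' _ * Matrix.toLin' _
    rw [_root_.map_mul V.ρ, LinearMap.toMatrix_mul, _root_.map_mul, Matrix.toLin'_mul]; rfl

def twist (σ : ℂ ≃+* ℂ) (V : FDRep ℂ G) : FDRep ℂ G := FDRep.of (twistρ σ V)

lemma twist_char (σ : ℂ ≃+* ℂ) (V : FDRep ℂ G) (g : G) :
    (twist σ V).character g = σ (V.character g) := by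
  show LinearMap.trace ℂ _ (Matrix.toLin' _) = σ (LinearMap.trace ℂ _ (V.ρ g))
  rw [LinearMap.trace_eq_matrix_trace ℂ (Pi.basisFun ℂ (Fin (finrank ℂ V))),
    LinearMap.toMatrix_eq_toMatrix', LinearMap.toMatrix'_toLin',
    LinearMap.trace_eq_matrix_trace ℂ (finBasis ℂ V),
    AddMonoidHom.map_trace σ]
  rfl

/-- Build a morphism of representations from a linear map commuting with the action. -/
def homOfComm {A B : FDRep ℂ G} (f : A →ₗ[ℂ] B) (h : ∀ g v, f (A.ρ g v) = B.ρ g (f v)) :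
    A ⟶ B :=
  ⟨⟨ModuleCat.ofHom f⟩, fun g => FGModuleCat.hom_ext (LinearMap.ext fun v => h g v)⟩

@[simp] lemma homOfComm_hom {A B : FDRep ℂ G} (f : A →ₗ[ℂ] B) (h) :
    (homOfComm f h).hom.hom.hom = f := rfl

lemma comm_apply {A B : FDRep ℂ G} (f : A ⟶ B) (g : G) (v : A) :
    f.hom (A.ρ g v) = B.ρ g (f.hom v) :=
  LinearMap.congr_fun (congrArg (fun k => k.hom.hom) (f.comm g)) v

lemma hom_ne_zero {A B : FDRep ℂ G} {f : A ⟶ B} (hf : f ≠ 0) :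
    (f.hom : A.V ⟶ B.V) ≠ 0 :=
  fun h => hf (Action.hom_ext f 0 (h.trans Action.zero_hom.symm))

lemma exists_ne_zero_of_finrank_eq_one {M : Type} [AddCommGroup M] [Module ℂ M]
    (h : finrank ℂ M = 1) : ∃ v : M, v ≠ 0 := by
  have : Nontrivial M := Module.nontrivial_of_finrank_pos (R := ℂ) (by omega)
  exact exists_ne 0

lemma eq_smul_of_finrank_one {M : Type} [AddCommGroup M] [Module ℂ M] [FiniteDimensional ℂ M]
    (h : finrank ℂ M = 1) {v : M} (hv : v ≠ 0) (w : M) : ∃ c : ℂ, w = c • v := by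
  have hs : Submodule.span ℂ {v} = ⊤ := by
    apply Submodule.eq_top_of_finrank_eq
    rw [finrank_span_singleton hv, h]
  have hw : w ∈ Submodule.span ℂ {v} := hs ▸ Submodule.mem_top
  obtain ⟨c, hc⟩ := Submodule.mem_span_singleton.mp hw
  exact ⟨c, hc.symm⟩


end GluedAux
end

/-- `χ` is an irreducible complex character of the group `G`. -/
def IsIrrChar (G : Type) [Monoid G] (χ : G → ℂ) : Prop :=
  ∃ V : FDRep ℂ G, CategoryTheory.Simple V ∧ V.character = χ

open GluedAux in
/-- In the situation of the gluing lemma, any field automorphism of `ℂ`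
fixing both `ϑ₁` and `ϑ₂` also fixes the unique common extension `ϑ`. -/
theorem galois_fixes_glued_extension (Y : Type) [Group Y] [Fintype Y]
    (X₁ X₂ : Subgroup Y) (hN : X₁.Normal)
    (hprod : ∀ y : Y, ∃ x₁ ∈ X₁, ∃ x₂ ∈ X₂, y = x₁ * x₂)
    (ϑ₁ : X₁ → ℂ) (ϑ₂ : X₂ → ℂ)
    (h₁ : IsIrrChar X₁ ϑ₁) (h₂ : IsIrrChar X₂ ϑ₂)
    (hinv : ∀ (y : Y) (x : X₁), ϑ₁ ⟨y * x * y⁻¹, hN.conj_mem x x.2 y⟩ = ϑ₁ x)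
    (hresirr : IsIrrChar ↥(X₁ ⊓ X₂)
      (fun x => ϑ₂ ⟨x.1, (Subgroup.mem_inf.mp x.2).2⟩))
    (hreseq : ∀ (x : Y) (hx₁ : x ∈ X₁) (hx₂ : x ∈ X₂), ϑ₁ ⟨x, hx₁⟩ = ϑ₂ ⟨x, hx₂⟩)
    (ϑ : Y → ℂ) (hϑ : IsIrrChar Y ϑ)
    (hext₁ : ∀ x : X₁, ϑ x = ϑ₁ x) (hext₂ : ∀ x : X₂, ϑ x = ϑ₂ x)
    (σ : ℂ ≃+* ℂ)
    (hσ₁ : ∀ x : X₁, σ (ϑ₁ x) = ϑ₁ x) (hσ₂ : ∀ x : X₂, σ (ϑ₂ x) = ϑ₂ x) :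
    ∀ y : Y, σ (ϑ y) = ϑ y := by
  classical
  obtain ⟨V, hVs, hVc⟩ := hϑ
  haveI := hVs
  obtain ⟨V₁, hV₁s, hV₁c⟩ := h₁
  haveI := hV₁s
  obtain ⟨V₂, hV₂s, hV₂c⟩ := h₂
  haveI := hV₂s
  obtain ⟨U, hUs, hUc⟩ := hresirr
  haveI := hUs
  haveI : Fintype ↥X₁ := Fintype.ofFinite _
  haveI : Fintype ↥X₂ := Fintype.ofFinite _
  haveI : Fintype ↥(X₁ ⊓ X₂) := Fintype.ofFinite _
  haveI := GluedAux.cardInv (G := Y)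
  set W := GluedAux.twist σ V with hW
  have hWc : ∀ g : Y, W.character g = σ (ϑ g) := fun g => by
    rw [hW, GluedAux.twist_char, hVc]
  have pV1 : ∀ x : ↥X₁, V.character ↑x = ϑ₁ x := fun x => by
    rw [hVc]; exact hext₁ x
  have pV2 : ∀ x : ↥X₂, V.character ↑x = ϑ₂ x := fun x => by
    rw [hVc]; exact hext₂ x
  have pW1 : ∀ x : ↥X₁, W.character ↑x = ϑ₁ x := fun x => by
    rw [hWc, hext₁, hσ₁]
  have pW2 : ∀ x : ↥X₂, W.character ↑x = ϑ₂ x := fun x => by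
    rw [hWc, hext₂, hσ₂]
  have main : ∀ A B : FDRep ℂ Y,
      (∀ x : ↥X₁, A.character ↑x = ϑ₁ x) → (∀ x : ↥X₂, A.character ↑x = ϑ₂ x) →
      (∀ x : ↥X₁, B.character ↑x = ϑ₁ x) → (∀ x : ↥X₂, B.character ↑x = ϑ₂ x) →
      ∃ F : A ⟶ B, F ≠ 0 := by
    intro A B hA1 hA2 hB1 hB2
    have e₁ : finrank ℂ ((res X₁.subtype A) ⟶ (res X₁.subtype B)) = 1 := by
      rw [finrank_hom_congr (res X₁.subtype B) (res X₁.subtype A) V₁ V₁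
        (fun x => by rw [res_char]; exact (hB1 x).trans (congrFun hV₁c x).symm)
        (fun x => by rw [res_char]; exact (hA1 x).trans (congrFun hV₁c x).symm),
        FDRep.finrank_hom_simple_simple, if_pos ⟨Iso.refl _⟩]
    have e₂ : finrank ℂ ((res X₂.subtype A) ⟶ (res X₂.subtype B)) = 1 := by
      rw [finrank_hom_congr (res X₂.subtype B) (res X₂.subtype A) V₂ V₂
        (fun x => by rw [res_char]; exact (hB2 x).trans (congrFun hV₂c x).symm)
        (fun x => by rw [res_char]; exact (hA2 x).trans (congrFun hV₂c x).symm),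
        FDRep.finrank_hom_simple_simple, if_pos ⟨Iso.refl _⟩]
    have eD : finrank ℂ ((res (X₁ ⊓ X₂).subtype A) ⟶ (res (X₁ ⊓ X₂).subtype B)) = 1 := by
      rw [finrank_hom_congr (res (X₁ ⊓ X₂).subtype B) (res (X₁ ⊓ X₂).subtype A) U U
        (fun d => by
          rw [res_char, congrFun hUc d]
          exact hB2 ⟨d.1, (Subgroup.mem_inf.mp d.2).2⟩)
        (fun d => by
          rw [res_char, congrFun hUc d]
          exact hA2 ⟨d.1, (Subgroup.mem_inf.mp d.2).2⟩),
        FDRep.finrank_hom_simple_simple, if_pos ⟨Iso.refl _⟩]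
    obtain ⟨α, hα⟩ := exists_ne_zero_of_finrank_eq_one e₁
    obtain ⟨β, hβ⟩ := exists_ne_zero_of_finrank_eq_one e₂
    let αD : (res (X₁ ⊓ X₂).subtype A) ⟶ (res (X₁ ⊓ X₂).subtype B) :=
      homOfComm α.hom.hom.hom (fun d v =>
        comm_apply α ⟨d.1, (Subgroup.mem_inf.mp d.2).1⟩ v)
    let βD : (res (X₁ ⊓ X₂).subtype A) ⟶ (res (X₁ ⊓ X₂).subtype B) :=
      homOfComm β.hom.hom.hom (fun d v =>
        comm_apply β ⟨d.1, (Subgroup.mem_inf.mp d.2).2⟩ v)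
    have hαD : αD ≠ 0 := fun h => by
      have h' := congrArg Action.Hom.hom h
      rw [Action.zero_hom] at h'
      exact hom_ne_zero hα h'
    have hβD : βD ≠ 0 := fun h =>
      hom_ne_zero hβ (congrArg Action.Hom.hom h)
    obtain ⟨c, hcd⟩ := eq_smul_of_finrank_one eD hαD βD
    have hc0 : c ≠ 0 := by
      rintro rfl
      rw [zero_smul] at hcd
      exact hβD hcd
    have hhom : β.hom = c • α.hom := by
      have h := congrArg Action.Hom.hom hcd
      rw [Action.smul_hom] at h
      ext w
      have h' := LinearMap.congr_fun (congrArg (fun k => k.hom.hom) h) w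
      exact h'
    refine ⟨homOfComm α.hom.hom.hom ?_, ?_⟩
    · intro y v
      obtain ⟨x₁, hx₁, x₂, hx₂, rfl⟩ := hprod y
      have hmulA : A.ρ (x₁ * x₂) v = A.ρ x₁ (A.ρ x₂ v) := by rw [map_mul]; rfl
      have hmulB : ∀ w, B.ρ (x₁ * x₂) w = B.ρ x₁ (B.ρ x₂ w) := fun w => by
        rw [map_mul]; rfl
      have hβe : ∀ w : A, β.hom w = c • α.hom w := fun w => by rw [hhom]; rfl
      have h2 : α.hom (A.ρ x₂ v) = B.ρ x₂ (α.hom v) := by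
        have hβc : β.hom (A.ρ x₂ v) = B.ρ x₂ (β.hom v) :=
          comm_apply β ⟨x₂, hx₂⟩ v
        rw [hβe, hβe] at hβc
        exact smul_right_injective _ hc0 (hβc.trans ((B.ρ x₂).map_smul c _))
      have step1 : α.hom (A.ρ (x₁ * x₂) v) = α.hom (A.ρ x₁ (A.ρ x₂ v)) :=
        congrArg _ hmulA
      exact step1.trans ((comm_apply α ⟨x₁, hx₁⟩ (A.ρ x₂ v)).trans
        ((congrArg _ h2).trans (hmulB (α.hom v)).symm))
    · intro h
      exact hom_ne_zero hα (congrArg Action.Hom.hom h)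
  obtain ⟨f, hf⟩ := main V W pV1 pV2 pW1 pW2
  obtain ⟨g', hg'⟩ := main W V pW1 pW2 pV1 pV2
  have hEndV : finrank ℂ (V ⟶ V) = 1 := by
    rw [FDRep.finrank_hom_simple_simple, if_pos ⟨Iso.refl _⟩]
  have hEndW : finrank ℂ (W ⟶ W) = 1 := by
    have hn : ((Fintype.card Y : ℂ)) ≠ 0 := Nat.cast_ne_zero.mpr Fintype.card_ne_zero
    have h1 := homFormula (G := Y) W W
    have h2 := homFormula (G := Y) V V
    rw [smul_eq_mul, invOf_eq_inv _] at h1 h2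
    have hsum : ∑ g : Y, W.character g * W.character g⁻¹
        = σ (∑ g : Y, V.character g * V.character g⁻¹) := by
      rw [map_sum]
      exact Finset.sum_congr rfl fun g _ => by
        rw [hWc, hWc, ← map_mul, hVc]
    rw [hsum] at h1
    have hfin : (finrank ℂ (W ⟶ W) : ℂ) = σ ((finrank ℂ (V ⟶ V) : ℂ)) := by
      rw [h1, h2, map_mul, map_inv₀, map_natCast]
    rw [hEndV] at hfin
    norm_num at hfin
    exact_mod_cast hfin
  have hidW : (𝟙 W : W ⟶ W) ≠ 0 := by
    intro h
    apply hf
    rw [← Category.comp_id f, h, Limits.comp_zero]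
  have hidV : (𝟙 V : V ⟶ V) ≠ 0 := by
    intro h
    apply hg'
    rw [← Category.comp_id g', h, Limits.comp_zero]
  obtain ⟨c, hc⟩ := eq_smul_of_finrank_one hEndW hidW (g' ≫ f)
  obtain ⟨d, hd⟩ := eq_smul_of_finrank_one hEndV hidV (f ≫ g')
  have hdc : d = c := by
    have hcomp1 : (f ≫ g') ≫ f = d • f := by
      rw [hd, Linear.smul_comp, Category.id_comp]
    have hcomp2 : f ≫ (g' ≫ f) = c • f := by
      rw [hc, Linear.comp_smul, Category.comp_id]
    have heq : d • f = c • f :=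
      hcomp1.symm.trans ((Category.assoc f g' f).trans hcomp2)
    have hsub : (d - c) • f = 0 := by rw [sub_smul, heq, sub_self]
    rcases smul_eq_zero.mp hsub with h | h
    · exact sub_eq_zero.mp h
    · exact absurd h hf
  have hc0 : c ≠ 0 := by
    rintro rfl
    rw [zero_smul] at hc
    haveI : CategoryTheory.Mono f := CategoryTheory.mono_of_nonzero_from_simple hf
    apply hg'
    exact (CategoryTheory.cancel_mono f).mp (by rw [hc, Limits.zero_comp])
  haveI : IsIso f := ⟨⟨c⁻¹ • g', by
      rw [Linear.comp_smul, hd, hdc, smul_smul, inv_mul_cancel₀ hc0, one_smul], by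
      rw [Linear.smul_comp, hc, smul_smul, inv_mul_cancel₀ hc0, one_smul]⟩⟩
  have hchar := FDRep.char_iso (asIso f)
  intro y
  have h := congrFun hchar y
  rw [hWc] at h
  exact h.symm.trans (congrFun hVc y)
end

section
/- Let S be a finite linearly ordered set and σ : S → S' a bijection to another finite linearly ordered set. For a subset I ⊆ S and x ∈ I, define pos_I(x) = |{y ∈ I : y ≤ x}|, and δ_I(x) = (−1)^{pos_{σ(I)}(σ(x)) − pos_I(x)}. Then for any I ⊆ S and distinct elements x, y ∈ I one has δ_I(x) · δ_{I∖{x}}(y) = δ_I(y) · δ_{I∖{y}}(x). -/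
/-- The position of `x` within the subset `I`: `pos_I(x) = |{y ∈ I : y ≤ x}|`. -/
def posIn {S : Type} [LinearOrder S] (I : Finset S) (x : S) : ℕ :=
  (I.filter (fun y => y ≤ x)).card

/-- The sign `δ_I(x) = (−1)^(pos_{σ(I)}(σ(x)) − pos_I(x))`. -/
def deltaSign {S S' : Type} [LinearOrder S] [LinearOrder S'] (σ : S ≃ S')
    (I : Finset S) (x : S) : ℤˣ :=
  (-1 : ℤˣ) ^ ((posIn (I.image σ) (σ x) : ℤ) - (posIn I x : ℤ))

lemma neg_one_zpow_eq_of_even_sub {a b : ℤ} (h : Even (a - b)) :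
    (-1 : ℤˣ) ^ a = (-1 : ℤˣ) ^ b := by
  obtain ⟨k, hk⟩ := h
  have ha : a = b + 2 * k := by omega
  rw [ha, zpow_add, mul_comm (2:ℤ) k, zpow_mul]
  norm_num

lemma posIn_erase {S : Type} [LinearOrder S] (I : Finset S) (x y : S) (hx : x ∈ I) :
    (posIn (I.erase x) y : ℤ) = (posIn I y : ℤ) - (if x ≤ y then 1 else 0) := by
  unfold posIn
  rw [Finset.filter_erase]
  by_cases h : x ≤ y
  · have hm : x ∈ I.filter (fun z => z ≤ y) := Finset.mem_filter.mpr ⟨hx, h⟩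
    rw [Finset.card_erase_of_mem hm, if_pos h]
    have := Finset.card_pos.mpr ⟨x, hm⟩
    push_cast [Nat.cast_sub this]
    ring
  · rw [Finset.erase_eq_of_notMem (by simp [h]), if_neg h]; ring

/-- For distinct `x, y ∈ I` one has `δ_I(x)·δ_{I∖{x}}(y) = δ_I(y)·δ_{I∖{y}}(x)`. -/
theorem deltaSign_exchange {S S' : Type} [LinearOrder S] [LinearOrder S']
    (σ : S ≃ S') (I : Finset S) (x y : S)
    (hx : x ∈ I) (hy : y ∈ I) (hxy : x ≠ y) :
    deltaSign σ I x * deltaSign σ (I.erase x) y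
      = deltaSign σ I y * deltaSign σ (I.erase y) x := by
  have hσx : σ x ∈ I.image σ := Finset.mem_image_of_mem _ hx
  have hσy : σ y ∈ I.image σ := Finset.mem_image_of_mem _ hy
  have hinj : Function.Injective σ := σ.injective
  unfold deltaSign
  rw [Finset.image_erase hinj, Finset.image_erase hinj, ← zpow_add, ← zpow_add]
  apply neg_one_zpow_eq_of_even_sub
  rw [posIn_erase I x y hx, posIn_erase I y x hy,
    posIn_erase (I.image σ) (σ x) (σ y) hσx, posIn_erase (I.image σ) (σ y) (σ x) hσy]
  have hA : (if x ≤ y then (1:ℤ) else 0) + (if y ≤ x then 1 else 0) = 1 := by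
    rcases lt_or_gt_of_ne hxy with h | h <;> simp [h.le, h.not_ge]
  have hB : (if σ x ≤ σ y then (1:ℤ) else 0) + (if σ y ≤ σ x then 1 else 0) = 1 := by
    rcases lt_or_gt_of_ne (fun h => hxy (hinj h)) with h | h <;> simp [h.le, h.not_ge]
  rw [Int.even_iff]
  omega
end

section
/- Let S be a finite linearly ordered set and σ : S → S a bijection. The value ε(I) of the sign function (defined by ε(∅)=1 and ε(I)=δ_I(x)ε(I∖{x})) on a σ-stable subset I ⊆ S does not depend on the choice of linear ordering of S: if ≤₁ and ≤₂ are two linear orders on S and I is σ-stable (σ(I) = I), then ε_{≤₁}(I) = ε_{≤₂}(I). -/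
/-!
Put `o(x, y) = -1` if `y ≤ x` and `o(x, y) = 1` otherwise, so that `o(y, x) = -o(x, y)` for
`x ≠ y`. Then `o(x, y) o(σx, σy)` depends only on the pair `{x, y}`, is `-1` exactly when `σ`
inverts the pair, and the recursion forces `ε(I)` to be the product of these signs over all pairs
in `I`. For two orders, the product of the two inversion signs of `{x, y}` rearranges as
`d{x, y} · d{σx, σy}`, where `d = o₁ o₂` is `-1` on the pairs where the orders disagree. If
`σ(I) = I` then `σ` permutes the pairs of `I`, so `ε₁(I) ε₂(I) = (∏ d)² = 1`.
-/

/-- The position of `x` within the subset `I` w.r.t. an explicit linear order `l`. -/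
def posL {S : Type} (l : LinearOrder S) (I : Finset S) (x : S) : ℕ :=
  letI := l
  (I.filter (fun y => y ≤ x)).card

/-- The sign `δ_I(x) = (−1)^(pos_{σ(I)}(σ(x)) − pos_I(x))` w.r.t. the order `l`. -/
def deltaL {S : Type} (l : LinearOrder S) (σ : S ≃ S) (I : Finset S) (x : S) : ℤˣ :=
  letI := l
  (-1 : ℤˣ) ^ ((posL l (I.image σ) (σ x) : ℤ) - (posL l I x : ℤ))

section Sym2Prod

variable {α M : Type*} [CommMonoid M]

lemma Finset.prod_sym2_cons (f : Sym2 α → M) (s : Finset α) {a : α} (ha : a ∉ s) :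
    ∏ z ∈ (s.cons a ha).sym2, f z = (∏ b ∈ s.cons a ha, f s(a, b)) * ∏ z ∈ s.sym2, f z := by
  rw [Finset.sym2_cons, Finset.prod_disjUnion, Finset.prod_map]
  rfl

lemma Finset.prod_sym2_map_of_image_eq [DecidableEq α] (f : Sym2 α → M) (σ : α ≃ α)
    {s : Finset α} (hs : s.image σ = s) :
    ∏ z ∈ s.sym2, f (z.map σ) = ∏ z ∈ s.sym2, f z := by
  conv_rhs => rw [← hs, Finset.sym2_image]
  exact (Finset.prod_image fun _ _ _ _ h => Sym2.map.injective σ.injective h).symm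

end Sym2Prod

variable {S : Type}

def orientSign (l : LinearOrder S) (x y : S) : ℤˣ :=
  letI := l
  if y ≤ x then -1 else 1

lemma orientSign_swap (l : LinearOrder S) {x y : S} (h : x ≠ y) :
    orientSign l y x = -orientSign l x y := by
  let := l
  rcases h.lt_or_gt with hxy | hxy <;> simp [orientSign, hxy.le, hxy.not_ge]

lemma prod_orientSign (l : LinearOrder S) (I : Finset S) (x : S) :
    ∏ y ∈ I, orientSign l x y = (-1) ^ posL l I x := by
  let := l
  rw [posL, ← Finset.prod_const, Finset.prod_filter]
  rfl

/-- `pairSign l l σ` is the inversion sign of `σ` on a pair; `pairSign l₁ l₂ (Equiv.refl S)` is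
`-1` exactly on the pairs where `l₁` and `l₂` disagree. -/
def pairSign (l l' : LinearOrder S) (σ : S ≃ S) : Sym2 S → ℤˣ :=
  Sym2.lift ⟨fun x y => orientSign l x y * orientSign l' (σ x) (σ y), fun x y => by
    obtain rfl | hxy := eq_or_ne x y
    · rfl
    · dsimp only
      rw [orientSign_swap l hxy, orientSign_swap l' (σ.injective.ne hxy), neg_mul_neg]⟩

@[simp]
lemma pairSign_mk (l l' : LinearOrder S) (σ : S ≃ S) (x y : S) :
    pairSign l l' σ s(x, y) = orientSign l x y * orientSign l' (σ x) (σ y) := rfl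

lemma pairSign_mul_pairSign (l₁ l₂ : LinearOrder S) (σ : S ≃ S) (z : Sym2 S) :
    pairSign l₁ l₁ σ z * pairSign l₂ l₂ σ z =
      pairSign l₁ l₂ (Equiv.refl S) z * pairSign l₁ l₂ (Equiv.refl S) (z.map σ) := by
  induction z using Sym2.ind with
  | _ x y => simp only [pairSign_mk, Sym2.map_mk, Equiv.refl_apply, mul_mul_mul_comm]

lemma deltaL_eq_prod_pairSign (l : LinearOrder S) (σ : S ≃ S) (I : Finset S) (x : S) :
    deltaL l σ I x = ∏ y ∈ I, pairSign l l σ s(x, y) := by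
  -- so that `I.image σ` below is built with the `DecidableEq` instance of `l`, as in `deltaL`
  let := l
  have hσ : ∏ y ∈ I, orientSign l (σ x) (σ y) = (-1) ^ posL l (I.image σ) (σ x) := by
    rw [← prod_orientSign, Finset.prod_image fun _ _ _ _ h => σ.injective h]
  simp only [pairSign_mk, Finset.prod_mul_distrib, hσ, prod_orientSign]
  rw [deltaL, zpow_sub, zpow_natCast, zpow_natCast, Int.units_inv_eq_self, mul_comm]

theorem eq_prod_pairSign_of_rec [DecidableEq S] (l : LinearOrder S) (σ : S ≃ S)
    (ε : Finset S → ℤˣ) (h0 : ε ∅ = 1)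
    (hrec : ∀ (I : Finset S) (x : S), x ∈ I → ε I = deltaL l σ I x * ε (I.erase x))
    (I : Finset S) : ε I = ∏ z ∈ I.sym2, pairSign l l σ z := by
  induction I using Finset.strongInduction with
  | _ I ih =>
    obtain rfl | ⟨x, hx⟩ := I.eq_empty_or_nonempty
    · rw [h0, Finset.sym2_empty, Finset.prod_empty]
    · have hI : (I.erase x).cons x (I.notMem_erase x) = I := by
        rw [Finset.cons_eq_insert, Finset.insert_erase hx]
      rw [hrec I x hx, ih _ (Finset.erase_ssubset hx), deltaL_eq_prod_pairSign, ← hI,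
        Finset.prod_sym2_cons, Finset.erase_cons]

theorem prod_pairSign_eq_of_image_eq [DecidableEq S] (l₁ l₂ : LinearOrder S) (σ : S ≃ S)
    {I : Finset S} (hstab : I.image σ = I) :
    ∏ z ∈ I.sym2, pairSign l₁ l₁ σ z = ∏ z ∈ I.sym2, pairSign l₂ l₂ σ z := by
  have hprod : (∏ z ∈ I.sym2, pairSign l₁ l₁ σ z) * ∏ z ∈ I.sym2, pairSign l₂ l₂ σ z = 1 := by
    rw [← Finset.prod_mul_distrib]
    simp only [pairSign_mul_pairSign]
    rw [Finset.prod_mul_distrib, Finset.prod_sym2_map_of_image_eq _ σ hstab, Int.units_mul_self]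
  rw [eq_inv_of_mul_eq_one_left hprod, Int.units_inv_eq_self]

theorem epsilon_indep_of_order_general {S : Type} [DecidableEq S] (σ : S ≃ S)
    (l₁ l₂ : LinearOrder S) (ε₁ ε₂ : Finset S → ℤˣ)
    (hε₁0 : ε₁ ∅ = 1)
    (hε₁rec : ∀ (I : Finset S) (x : S), x ∈ I →
      ε₁ I = deltaL l₁ σ I x * ε₁ (I.erase x))
    (hε₂0 : ε₂ ∅ = 1)
    (hε₂rec : ∀ (I : Finset S) (x : S), x ∈ I →
      ε₂ I = deltaL l₂ σ I x * ε₂ (I.erase x))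
    (I : Finset S) (hstab : I.image σ = I) :
    ε₁ I = ε₂ I := by
  rw [eq_prod_pairSign_of_rec l₁ σ ε₁ hε₁0 hε₁rec, eq_prod_pairSign_of_rec l₂ σ ε₂ hε₂0 hε₂rec]
  exact prod_pairSign_eq_of_image_eq l₁ l₂ σ hstab

/-- On `σ`-stable subsets, the value of the sign function `ε` does not depend on
the chosen linear ordering of `S`. -/
theorem epsilon_indep_of_order {S : Type} [Fintype S] [DecidableEq S] (σ : S ≃ S)
    (l₁ l₂ : LinearOrder S) (ε₁ ε₂ : Finset S → ℤˣ)
    (hε₁0 : ε₁ ∅ = 1)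
    (hε₁rec : ∀ (I : Finset S) (x : S), x ∈ I →
      ε₁ I = deltaL l₁ σ I x * ε₁ (I.erase x))
    (hε₂0 : ε₂ ∅ = 1)
    (hε₂rec : ∀ (I : Finset S) (x : S), x ∈ I →
      ε₂ I = deltaL l₂ σ I x * ε₂ (I.erase x))
    (I : Finset S) (hstab : I.image σ = I) :
    ε₁ I = ε₂ I :=
  epsilon_indep_of_order_general σ l₁ l₂ ε₁ ε₂ hε₁0 hε₁rec hε₂0 hε₂rec I hstab
end

section
/- Let p ≥ 2 be an integer, f a positive integer, and d a positive integer. Then Φ_d(p^f) = ∏ Φ_{de}(p), where the product runs over all positive divisors e of f such that gcd(d, f/e) = 1. -/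
open Polynomial Finset

private lemma gcd_mul_prime_iff {q d x : ℕ} (hq : q.Prime) :
    Nat.gcd (d * q) x = 1 ↔ Nat.gcd d x = 1 ∧ ¬ q ∣ x := by
  have h : Nat.Coprime (d * q) x ↔ Nat.Coprime d x ∧ Nat.Coprime q x :=
    Nat.coprime_mul_iff_left
  rw [show (Nat.gcd (d * q) x = 1) = Nat.Coprime (d * q) x from rfl,
    show (Nat.gcd d x = 1) = Nat.Coprime d x from rfl, h,
    Nat.Prime.coprime_iff_not_dvd hq]

private lemma case_dvd {q m e : ℕ} (hq : 0 < q) (hm : 0 < m) (he : e ∣ q * m)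
    (h : q ∣ (q * m / e)) :
    e ∣ m ∧ q * m / e = q * (m / e) := by
  obtain ⟨t, ht⟩ := he
  have he0 : e ≠ 0 := by rintro rfl; rw [zero_mul] at ht; exact (by positivity : 0 < q * m).ne' ht
  have htv : q * m / e = t := by rw [ht, Nat.mul_div_cancel_left _ (Nat.pos_of_ne_zero he0)]
  rw [htv] at h
  obtain ⟨s, rfl⟩ := h
  have hm' : m = e * s := by
    have : q * m = q * (e * s) := by rw [ht]; ring
    exact Nat.eq_of_mul_eq_mul_left hq this
  refine ⟨⟨s, hm'⟩, ?_⟩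
  rw [htv, hm', Nat.mul_div_cancel_left _ (Nat.pos_of_ne_zero he0)]

private lemma case_ndvd {q m e : ℕ} (hq : q.Prime) (hm : 0 < m) (he : e ∣ q * m)
    (h : ¬ q ∣ (q * m / e)) :
    q ∣ e ∧ (e / q) ∣ m ∧ q * m / e = m / (e / q) := by
  obtain ⟨t, ht⟩ := he
  have he0 : e ≠ 0 := by
    rintro rfl; rw [zero_mul] at ht
    exact (Nat.mul_pos hq.pos hm).ne' ht
  have htv : q * m / e = t := by rw [ht, Nat.mul_div_cancel_left _ (Nat.pos_of_ne_zero he0)]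
  rw [htv] at h
  have hqe : q ∣ e := by
    rcases (Nat.Prime.dvd_mul hq).1 ⟨m, ht.symm⟩ with h' | h'
    · exact h'
    · exact absurd h' h
  obtain ⟨e', rfl⟩ := hqe
  have he'0 : e' ≠ 0 := by rintro rfl; simp at he0
  have hm' : m = e' * t := by
    have : q * m = q * (e' * t) := by rw [ht]; ring
    exact Nat.eq_of_mul_eq_mul_left hq.pos this
  have hdq : q * e' / q = e' := Nat.mul_div_cancel_left _ hq.pos
  rw [hdq]
  refine ⟨⟨e', rfl⟩, ⟨t, hm'⟩, ?_⟩
  rw [htv, hm', Nat.mul_div_cancel_left _ (Nat.pos_of_ne_zero he'0)]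

private lemma expand_cyclo : ∀ f : ℕ, 0 < f → ∀ d : ℕ, 0 < d →
    (Polynomial.expand ℤ f) (Polynomial.cyclotomic d ℤ) =
      ∏ e ∈ f.divisors.filter (fun e => Nat.gcd d (f / e) = 1),
        Polynomial.cyclotomic (d * e) ℤ := by
  intro f
  induction f using Nat.strong_induction_on with
  | _ f ih =>
    intro hf d hd
    rcases eq_or_lt_of_le (show 1 ≤ f from hf) with h1 | h1
    · -- f = 1
      rw [← h1]
      simp [Nat.divisors_one, Finset.filter_singleton, Nat.gcd_one_right]
    · -- f > 1
      have hq : f.minFac.Prime := Nat.minFac_prime (by omega)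
      obtain ⟨m, hfm⟩ : f.minFac ∣ f := Nat.minFac_dvd f
      set q := f.minFac
      have hm : 0 < m := by
        rcases Nat.eq_zero_or_pos m with rfl | h
        · rw [mul_zero] at hfm; omega
        · exact h
      have hmf : m < f := by
        have h2 := hq.two_le
        have : 2 * m ≤ q * m := Nat.mul_le_mul_right m h2
        omega
      rw [hfm]
      rw [show (Polynomial.expand ℤ (q * m)) (cyclotomic d ℤ)
            = (Polynomial.expand ℤ m) ((Polynomial.expand ℤ q) (cyclotomic d ℤ)) from by
          rw [Polynomial.expand_expand, mul_comm]]
      by_cases hqd : q ∣ d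
      · -- q ∣ d case
        rw [Polynomial.cyclotomic_expand_eq_cyclotomic hq hqd,
          ih m hmf hm (d * q) (Nat.mul_pos hd hq.pos)]
        refine Finset.prod_nbij' (fun e' => q * e') (fun e => e / q) ?_ ?_ ?_ ?_ ?_
        · intro e' he'
          simp only [mem_filter, Nat.mem_divisors] at he' ⊢
          obtain ⟨⟨hdvd, _⟩, hg⟩ := he'
          have he'0 : e' ≠ 0 := by rintro rfl; simp at hdvd; omega
          have hqm : q * m / (q * e') = m / e' := Nat.mul_div_mul_left _ _ hq.pos
          rw [gcd_mul_prime_iff hq] at hg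
          refine ⟨⟨mul_dvd_mul_left q hdvd, (Nat.mul_pos hq.pos hm).ne'⟩, ?_⟩
          rw [hqm]; exact hg.1
        · intro e he
          simp only [mem_filter, Nat.mem_divisors] at he ⊢
          obtain ⟨⟨hdvd, _⟩, hg⟩ := he
          have hqnd : ¬ q ∣ (q * m / e) := by
            intro hcon
            have : q ∣ Nat.gcd d (q * m / e) := Nat.dvd_gcd hqd hcon
            rw [hg] at this
            exact hq.ne_one (Nat.eq_one_of_dvd_one this)
          obtain ⟨hqe, he'm, heq⟩ := case_ndvd hq hm hdvd hqnd
          rw [heq] at hg hqnd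
          refine ⟨⟨he'm, hm.ne'⟩, ?_⟩
          rw [gcd_mul_prime_iff hq]
          refine ⟨hg, ?_⟩
          intro hcon
          have : q ∣ Nat.gcd d (m / (e / q)) := Nat.dvd_gcd hqd hcon
          rw [hg] at this
          exact hq.ne_one (Nat.eq_one_of_dvd_one this)
        · intro e' _
          show q * e' / q = e'
          exact Nat.mul_div_cancel_left _ hq.pos
        · intro e he
          simp only [mem_filter, Nat.mem_divisors] at he
          obtain ⟨⟨hdvd, _⟩, hg⟩ := he
          have hqnd : ¬ q ∣ (q * m / e) := by
            intro hcon
            have : q ∣ Nat.gcd d (q * m / e) := Nat.dvd_gcd hqd hcon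
            rw [hg] at this
            exact hq.ne_one (Nat.eq_one_of_dvd_one this)
          obtain ⟨hqe, _, _⟩ := case_ndvd hq hm hdvd hqnd
          exact Nat.mul_div_cancel' hqe
        · intro e' _
          show cyclotomic (d * q * e') ℤ = cyclotomic (d * (q * e')) ℤ
          rw [mul_assoc]
      · -- q ∤ d case
        rw [Polynomial.cyclotomic_expand_eq_cyclotomic_mul hq hqd, map_mul,
          ih m hmf hm (d * q) (Nat.mul_pos hd hq.pos), ih m hmf hm d hd]
        rw [← Finset.prod_filter_mul_prod_filter_not
          ((q * m).divisors.filter (fun e => Nat.gcd d (q * m / e) = 1))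
          (fun e => ¬ q ∣ (q * m / e))]
        congr 1
        · -- e with ¬ q ∣ (qm/e)  ↔  e = q*e', gcd(dq, m/e')=1
          refine (Finset.prod_nbij' (fun e => e / q) (fun e' => q * e') ?_ ?_ ?_ ?_ ?_).symm
          · intro e he
            simp only [mem_filter, Nat.mem_divisors] at he ⊢
            obtain ⟨⟨⟨hdvd, _⟩, hg⟩, hnd⟩ := he
            obtain ⟨hqe, he'm, heq⟩ := case_ndvd hq hm hdvd hnd
            rw [heq] at hg hnd
            refine ⟨⟨he'm, hm.ne'⟩, ?_⟩
            rw [gcd_mul_prime_iff hq]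
            exact ⟨hg, hnd⟩
          · intro e' he'
            simp only [mem_filter, Nat.mem_divisors] at he' ⊢
            obtain ⟨⟨hdvd, _⟩, hg⟩ := he'
            rw [gcd_mul_prime_iff hq] at hg
            have hqm : q * m / (q * e') = m / e' := Nat.mul_div_mul_left _ _ hq.pos
            rw [hqm]
            exact ⟨⟨⟨mul_dvd_mul_left q hdvd, (Nat.mul_pos hq.pos hm).ne'⟩, hg.1⟩, hg.2⟩
          · intro e he
            simp only [mem_filter, Nat.mem_divisors] at he
            obtain ⟨⟨⟨hdvd, _⟩, hg⟩, hnd⟩ := he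
            obtain ⟨hqe, _, _⟩ := case_ndvd hq hm hdvd hnd
            exact Nat.mul_div_cancel' hqe
          · intro e' _
            show q * e' / q = e'
            exact Nat.mul_div_cancel_left _ hq.pos
          · intro e he
            simp only [mem_filter, Nat.mem_divisors] at he
            obtain ⟨⟨⟨hdvd, _⟩, hg⟩, hnd⟩ := he
            obtain ⟨hqe, _, _⟩ := case_ndvd hq hm hdvd hnd
            show cyclotomic (d * e) ℤ = cyclotomic (d * q * (e / q)) ℤ
            rw [mul_assoc, Nat.mul_div_cancel' hqe]
        · -- e with q ∣ (qm/e)  ↔  e ∣ m, gcd(d, m/e)=1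
          have hset : Finset.filter (fun e => ¬ ¬ q ∣ (q * m / e))
              ((q * m).divisors.filter (fun e => Nat.gcd d (q * m / e) = 1))
              = m.divisors.filter (fun e => Nat.gcd d (m / e) = 1) := by
            ext e
            simp only [mem_filter, Nat.mem_divisors, not_not]
            constructor
            · rintro ⟨⟨⟨hdvd, _⟩, hg⟩, hqd'⟩
              obtain ⟨hem, heq⟩ := case_dvd hq.pos hm hdvd hqd'
              rw [heq, show (Nat.gcd d (q * (m / e)) = 1) = Nat.Coprime d (q * (m / e)) from rfl,
                Nat.coprime_mul_iff_right] at hg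
              exact ⟨⟨hem, hm.ne'⟩, hg.2⟩
            · rintro ⟨⟨hdvd, _⟩, hg⟩
              have heq : q * m / e = q * (m / e) := Nat.mul_div_assoc q hdvd
              refine ⟨⟨⟨hdvd.trans (dvd_mul_left m q), (Nat.mul_pos hq.pos hm).ne'⟩, ?_⟩, ?_⟩
              · rw [heq, show (Nat.gcd d (q * (m / e)) = 1) = Nat.Coprime d (q * (m / e)) from rfl,
                  Nat.coprime_mul_iff_right]
                exact ⟨((Nat.Prime.coprime_iff_not_dvd hq).2 hqd).symm, hg⟩
              · rw [heq]; exact dvd_mul_right q (m / e)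
          rw [hset]

/-- `Φ_d(p^f) = ∏_{e ∣ f, gcd(d, f/e) = 1} Φ_{de}(p)`. -/
theorem cyclotomic_eval_pow (p : ℤ) (hp : 2 ≤ p) (f : ℕ) (hf : 0 < f)
    (d : ℕ) (hd : 0 < d) :
    (Polynomial.cyclotomic d ℤ).eval (p ^ f) =
      ∏ e ∈ f.divisors.filter (fun e => Nat.gcd d (f / e) = 1),
        (Polynomial.cyclotomic (d * e) ℤ).eval p := by
  rw [← Polynomial.expand_eval, expand_cyclo f hf d hd, Polynomial.eval_prod]
end
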